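/- arXiv:1102.2690 — 6 statements merged into one kernel-verified Lean document; each statement's English description precedes it below -/
import Mathlib

section
/- Let K be a finite set and k the rates of an irreducible Markov jump process, μ > 0 a probability distribution on K. Restrict Y_μ(W) := ∑_{x,y} μ(x) k(x,y) exp((W(y)-W(x))/2) to functions W vanishing at a fixed root x₀ ∈ K. Then Y_μ is strictly convex on this space: if Y_μ(λW₁+(1-λ)W₂) = λY_μ(W₁)+(1-λ)Y_μ(W₂) for some λ ∈ (0,1), then W₁ = W₂. -/
open Finset

/-- `Y_μ(W) = ∑_{x,y} μ(x) k(x,y) exp((W(y)-W(x))/2)` -/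
noncomputable def Ymu {K : Type*} [Fintype K] (k : K → K → ℝ) (μ : K → ℝ) (W : K → ℝ) : ℝ :=
  ∑ x, ∑ y, μ x * k x y * Real.exp ((W y - W x) / 2)

theorem strict_convexity_of_Ymu_rooted {K : Type*} [Fintype K]
    (k : K → K → ℝ) (hk : ∀ x y, 0 ≤ k x y)
    (hirr : ∀ x y : K, x ≠ y → Relation.TransGen (fun a b => 0 < k a b) x y)
    (μ : K → ℝ) (hμpos : ∀ x, 0 < μ x) (hμsum : ∑ x, μ x = 1)
    (x₀ : K) (W₁ W₂ : K → ℝ) (hW₁ : W₁ x₀ = 0) (hW₂ : W₂ x₀ = 0)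
    (l : ℝ) (hl : l ∈ Set.Ioo (0 : ℝ) 1)
    (heq : Ymu k μ (l • W₁ + (1 - l) • W₂) = l * Ymu k μ W₁ + (1 - l) * Ymu k μ W₂) :
    W₁ = W₂ := by
  obtain ⟨hl0, hl1⟩ := hl
  have hl1' : (0:ℝ) < 1 - l := by linarith
  set a : K → K → ℝ := fun x y => (W₁ y - W₁ x) / 2 with ha
  set b : K → K → ℝ := fun x y => (W₂ y - W₂ x) / 2 with hb
  -- rewrite heq as a sum equality over the product
  have hWc : ∀ x y : K,
      ((l • W₁ + (1 - l) • W₂) y - (l • W₁ + (1 - l) • W₂) x) / 2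
        = l * a x y + (1 - l) * b x y := by
    intro x y
    simp only [Pi.add_apply, Pi.smul_apply, smul_eq_mul, ha, hb]
    ring
  -- pointwise convexity inequality
  have hle : ∀ x y : K,
      μ x * k x y * Real.exp (l * a x y + (1 - l) * b x y)
        ≤ μ x * k x y * (l * Real.exp (a x y) + (1 - l) * Real.exp (b x y)) := by
    intro x y
    have := convexOn_exp.2 (Set.mem_univ (a x y)) (Set.mem_univ (b x y))
      hl0.le hl1'.le (by ring)
    simp only [smul_eq_mul] at this
    exact mul_le_mul_of_nonneg_left this (mul_nonneg (hμpos x).le (hk x y))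
  -- the key claim: positive-rate edges force equal increments
  have key : ∀ x y : K, 0 < k x y → a x y = b x y := by
    intro x y hkxy
    by_contra hne
    -- strict inequality at (x,y)
    have hstrict : μ x * k x y * Real.exp (l * a x y + (1 - l) * b x y)
        < μ x * k x y * (l * Real.exp (a x y) + (1 - l) * Real.exp (b x y)) := by
      have := strictConvexOn_exp.2 (Set.mem_univ (a x y)) (Set.mem_univ (b x y))
        hne hl0 hl1' (by ring)
      simp only [smul_eq_mul] at this
      exact mul_lt_mul_of_pos_left this (mul_pos (hμpos x) hkxy)
    -- total strict inequality contradicts heq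
    have hsumlt :
        (∑ p : K × K, μ p.1 * k p.1 p.2 * Real.exp (l * a p.1 p.2 + (1 - l) * b p.1 p.2))
          < ∑ p : K × K, μ p.1 * k p.1 p.2 *
              (l * Real.exp (a p.1 p.2) + (1 - l) * Real.exp (b p.1 p.2)) := by
      refine Finset.sum_lt_sum (fun p _ => hle p.1 p.2) ⟨(x, y), Finset.mem_univ _, hstrict⟩
    have hLHS : Ymu k μ (l • W₁ + (1 - l) • W₂)
        = ∑ p : K × K, μ p.1 * k p.1 p.2 * Real.exp (l * a p.1 p.2 + (1 - l) * b p.1 p.2) := by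
      rw [Ymu, Fintype.sum_prod_type]
      exact Finset.sum_congr rfl fun x _ => Finset.sum_congr rfl fun y _ => by rw [hWc x y]
    have hRHS : l * Ymu k μ W₁ + (1 - l) * Ymu k μ W₂
        = ∑ p : K × K, μ p.1 * k p.1 p.2 *
            (l * Real.exp (a p.1 p.2) + (1 - l) * Real.exp (b p.1 p.2)) := by
      simp only [Ymu, Fintype.sum_prod_type, Finset.mul_sum, ← Finset.sum_add_distrib]
      exact Finset.sum_congr rfl fun x _ => Finset.sum_congr rfl fun y _ => by
        simp only [ha, hb]; ring
    rw [hLHS, hRHS] at heq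
    exact absurd heq (ne_of_lt hsumlt)
  -- propagate along paths: W₁ - W₂ is constant on positive-rate edges
  have step : ∀ x y : K, 0 < k x y → W₁ y - W₂ y = W₁ x - W₂ x := by
    intro x y h
    have := key x y h
    simp only [ha, hb] at this
    linarith
  have path : ∀ y : K, Relation.TransGen (fun a b => 0 < k a b) x₀ y →
      W₁ y - W₂ y = W₁ x₀ - W₂ x₀ := by
    intro y h
    induction h with
    | single h => exact step _ _ h
    | tail _ h ih => rw [step _ _ h, ih]
  funext y
  by_cases hy : y = x₀
  · rw [hy, hW₁, hW₂]
  · have := path y (hirr x₀ y (Ne.symm hy))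
    rw [hW₁, hW₂] at this
    linarith
end

section
/- Let K be a finite set and k the rates of an irreducible Markov jump process. For every strictly positive probability distribution μ on K there exists a potential V : K → ℝ such that μ is stationary for the modified rates k_V(x,y) := k(x,y) exp((V(y)-V(x))/2), i.e., ∑_y [k_V(x,y)μ(x) − k_V(y,x)μ(y)] = 0 for all x ∈ K. Moreover V is unique up to an additive constant. -/
/-!
The potential is a minimiser of the energy `W ↦ ∑ x y, μ x * k x y * exp ((W y - W x) / 2)`,
whose partial derivative in `W x` is half of inflow minus outflow of the modified rates at `x`.
The energy is invariant under adding constants, and it is coercive modulo constants: on a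
sublevel set every edge term bounds `W y - W x` from above, and irreducibility chains these
bounds along paths. Uniqueness is a maximum principle: if `V` and `V'` both work, the modified
rates of `V` form a balanced flow that `V' - V` keeps balanced, which forces `V' - V` to be
constant along every edge leaving one of its maxima, hence everywhere.
-/

open Finset Real Relation

theorem Relation.ReflTransGen.exists_sub_le_mul {α : Type*} {r : α → α → Prop} {x y : α}
    (h : ReflTransGen r x y) :
    ∃ n : ℕ, ∀ (W : α → ℝ) (M : ℝ), (∀ a b, r a b → W b - W a ≤ M) →
      W y - W x ≤ n * M := by
  induction h with
  | refl => exact ⟨0, fun W M _ => by simp⟩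
  | tail _ hbc ih =>
    obtain ⟨n, hn⟩ := ih
    refine ⟨n + 1, fun W M hW => ?_⟩
    push_cast
    linarith [hW _ _ hbc, hn W M hW]

theorem Finset.sum_sum_mul_pi_single_sub {K : Type*} [Fintype K] [DecidableEq K]
    (f : K → K → ℝ) (x : K) :
    ∑ u, ∑ v, f u v * ((Pi.single x 1 : K → ℝ) v - (Pi.single x 1 : K → ℝ) u) =
      ∑ u, f u x - ∑ v, f x v := by
  simp only [mul_sub, sum_sub_distrib, Pi.single_apply, mul_ite, mul_one, mul_zero,
    sum_ite_eq', mem_univ, if_true]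
  rw [sum_comm (f := fun u v => if u = x then f u v else 0)]
  simp

namespace JumpRates

variable {K : Type*} {a : K → K → ℝ}

/-- The modified rates `k_V` of the paper. -/
noncomputable def tilt (a : K → K → ℝ) (W : K → ℝ) (u v : K) : ℝ :=
  a u v * exp ((W v - W u) / 2)

theorem tilt_tilt (a : K → K → ℝ) (W V : K → ℝ) : tilt (tilt a W) V = tilt a (W + V) := by
  ext u v
  simp only [tilt, Pi.add_apply, mul_assoc, ← exp_add]
  ring_nf

theorem tilt_nonneg (ha : ∀ u v, 0 ≤ a u v) (W : K → ℝ) (u v : K) : 0 ≤ tilt a W u v :=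
  mul_nonneg (ha u v) (exp_pos _).le

theorem tilt_pos {u v : K} (huv : 0 < a u v) (W : K → ℝ) : 0 < tilt a W u v :=
  mul_pos huv (exp_pos _)

variable [Fintype K]

def IsBalanced (b : K → K → ℝ) : Prop :=
  ∀ x, ∑ y, b x y = ∑ y, b y x

noncomputable def tiltEnergy (a : K → K → ℝ) (W : K → ℝ) : ℝ :=
  ∑ u, ∑ v, tilt a W u v

theorem tiltEnergy_add_const (a : K → K → ℝ) (W : K → ℝ) (c : ℝ) :
    tiltEnergy a (W + fun _ => c) = tiltEnergy a W := by
  simp [tiltEnergy, tilt]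

theorem continuous_tiltEnergy (a : K → K → ℝ) : Continuous (tiltEnergy a) := by
  unfold tiltEnergy tilt
  fun_prop

theorem tilt_le_tiltEnergy (ha : ∀ u v, 0 ≤ a u v) (W : K → ℝ) (u v : K) :
    tilt a W u v ≤ tiltEnergy a W :=
  calc tilt a W u v ≤ ∑ v', tilt a W u v' :=
        single_le_sum (fun v' _ => tilt_nonneg ha W u v') (mem_univ v)
    _ ≤ tiltEnergy a W :=
        single_le_sum (f := fun u' => ∑ v', tilt a W u' v')
          (fun u' _ => sum_nonneg fun v' _ => tilt_nonneg ha W u' v') (mem_univ u)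

theorem sub_le_of_tiltEnergy_le (ha : ∀ u v, 0 ≤ a u v) {W : K → ℝ} {C : ℝ}
    (hW : tiltEnergy a W ≤ C) {u v : K} (huv : 0 < a u v) :
    W v - W u ≤ 2 * log (C / a u v) := by
  have hexp : exp ((W v - W u) / 2) ≤ C / a u v := by
    rw [le_div_iff₀ huv, mul_comm]
    exact (tilt_le_tiltEnergy ha W u v).trans hW
  have := log_le_log (exp_pos _) hexp
  rw [log_exp] at this
  linarith

theorem isCompact_sublevel (ha : ∀ u v, 0 ≤ a u v)
    (hconn : ∀ x y, ReflTransGen (fun u v => 0 < a u v) x y) (x₀ : K) (C : ℝ) :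
    IsCompact {W | W x₀ = 0 ∧ tiltEnergy a W ≤ C} := by
  refine Metric.isCompact_of_isClosed_isBounded
    ((isClosed_eq (continuous_apply x₀) continuous_const).inter
      (isClosed_le (continuous_tiltEnergy a) continuous_const)) ?_
  obtain ⟨M, hM⟩ := Finite.bddAbove_range fun p : K × K => 2 * log (C / a p.1 p.2)
  have hedge : ∀ W ∈ {W : K → ℝ | W x₀ = 0 ∧ tiltEnergy a W ≤ C},
      ∀ u v, 0 < a u v → W v - W u ≤ M := fun W hW u v huv =>
    (sub_le_of_tiltEnergy_le ha hW.2 huv).trans (hM ⟨(u, v), rfl⟩)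
  choose n hn using fun z => (hconn x₀ z).exists_sub_le_mul
  choose m hm using fun z => (hconn z x₀).exists_sub_le_mul
  rw [isBounded_iff_bddBelow_bddAbove]
  refine ⟨⟨fun z => -(m z * M), fun W hW z => ?_⟩, ⟨fun z => n z * M, fun W hW z => ?_⟩⟩
  · linarith [hm z W M (hedge W hW), hW.1]
  · linarith [hn z W M (hedge W hW), hW.1]

theorem exists_forall_tiltEnergy_le (ha : ∀ u v, 0 ≤ a u v)
    (hconn : ∀ x y, ReflTransGen (fun u v => 0 < a u v) x y) :
    ∃ W, ∀ Y, tiltEnergy a W ≤ tiltEnergy a Y := by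
  rcases isEmpty_or_nonempty K with _ | ⟨⟨x₀⟩⟩
  · exact ⟨0, fun Y => by rw [Subsingleton.elim Y 0]⟩
  obtain ⟨W, -, hWmin⟩ := (isCompact_sublevel ha hconn x₀ (tiltEnergy a 0)).exists_isMinOn
    ⟨0, rfl, le_rfl⟩ (continuous_tiltEnergy a).continuousOn
  refine ⟨W, fun Y => ?_⟩
  by_cases hY : tiltEnergy a Y ≤ tiltEnergy a 0
  · calc tiltEnergy a W ≤ tiltEnergy a (Y + fun _ => -Y x₀) :=
          hWmin ⟨by simp, by rwa [tiltEnergy_add_const]⟩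
      _ = tiltEnergy a Y := tiltEnergy_add_const a Y _
  · exact (hWmin ⟨rfl, le_rfl⟩).trans (le_of_not_ge hY)

theorem hasDerivAt_tiltEnergy_add_smul (a : K → K → ℝ) (W δ : K → ℝ) :
    HasDerivAt (fun t : ℝ => tiltEnergy a (W + t • δ))
      ((∑ u, ∑ v, tilt a W u v * (δ v - δ u)) / 2) 0 := by
  rw [sum_div]
  refine HasDerivAt.fun_sum fun u _ => ?_
  rw [sum_div]
  refine HasDerivAt.fun_sum fun v _ => ?_
  have hlin : HasDerivAt (fun t : ℝ => ((W + t • δ) v - (W + t • δ) u) / 2)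
      ((δ v - δ u) / 2) 0 := by
    simp only [Pi.add_apply, Pi.smul_apply, smul_eq_mul]
    exact (((hasDerivAt_mul_const (δ v)).const_add (W v)).sub
      ((hasDerivAt_mul_const (δ u)).const_add (W u))).div_const 2
  refine (hlin.exp.const_mul (a u v)).congr_deriv ?_
  simp only [tilt, zero_smul, add_zero]
  ring

theorem isBalanced_tilt_of_forall_tiltEnergy_le {W : K → ℝ}
    (hW : ∀ Y, tiltEnergy a W ≤ tiltEnergy a Y) : IsBalanced (tilt a W) := by
  classical
  intro x
  have hmin : IsLocalMin (fun t : ℝ => tiltEnergy a (W + t • Pi.single x (1 : ℝ))) 0 :=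
    Filter.Eventually.of_forall fun t => by simpa using hW _
  have h := hmin.hasDerivAt_eq_zero (hasDerivAt_tiltEnergy_add_smul a W _)
  rw [sum_sum_mul_pi_single_sub] at h
  linarith

theorem exists_isBalanced_tilt (ha : ∀ u v, 0 ≤ a u v)
    (hconn : ∀ x y, ReflTransGen (fun u v => 0 < a u v) x y) :
    ∃ W, IsBalanced (tilt a W) :=
  (exists_forall_tiltEnergy_le ha hconn).imp fun _ => isBalanced_tilt_of_forall_tiltEnergy_le

-- Maximum principle: at a maximum of `d`, tilting can only lower the outflow and raise the inflow.
theorem IsBalanced.eq_of_isBalanced_tilt {b : K → K → ℝ} (hb : ∀ u v, 0 ≤ b u v)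
    (hbal : IsBalanced b) {d : K → ℝ} (hd : IsBalanced (tilt b d)) {z y : K}
    (hz : ∀ w, d w ≤ d z) (hzy : 0 < b z y) : d y = d z := by
  by_contra hne
  have hlt : d y < d z := (hz y).lt_of_ne hne
  have hout : ∑ w, tilt b d z w < ∑ w, b z w :=
    sum_lt_sum
      (fun w _ => mul_le_of_le_one_right (hb z w) (exp_le_one_iff.2 (by linarith [hz w])))
      ⟨y, mem_univ y, mul_lt_of_lt_one_right hzy (exp_lt_one_iff.2 (by linarith))⟩
  have hin : ∑ w, b w z ≤ ∑ w, tilt b d w z :=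
    sum_le_sum fun w _ =>
      le_mul_of_one_le_right (hb w z) (one_le_exp_iff.2 (by linarith [hz w]))
  linarith [hbal z, hd z]

theorem IsBalanced.exists_eq_const_of_isBalanced_tilt {b : K → K → ℝ}
    (hb : ∀ u v, 0 ≤ b u v) (hconn : ∀ x y, ReflTransGen (fun u v => 0 < b u v) x y)
    (hbal : IsBalanced b) {d : K → ℝ} (hd : IsBalanced (tilt b d)) : ∃ c, ∀ x, d x = c := by
  rcases isEmpty_or_nonempty K with _ | _
  · exact ⟨0, isEmptyElim⟩
  obtain ⟨z, hz⟩ := Finite.exists_max d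
  refine ⟨d z, fun x => ?_⟩
  induction hconn z x with
  | refl => rfl
  | tail _ hvw ih => exact (hbal.eq_of_isBalanced_tilt hb hd (ih ▸ hz) hvw).trans ih

theorem exists_eq_add_const_of_isBalanced_tilt (ha : ∀ u v, 0 ≤ a u v)
    (hconn : ∀ x y, ReflTransGen (fun u v => 0 < a u v) x y) {W V : K → ℝ}
    (hW : IsBalanced (tilt a W)) (hV : IsBalanced (tilt a V)) : ∃ c, ∀ x, V x = W x + c := by
  have hconnW : ∀ x y, ReflTransGen (fun u v => 0 < tilt a W u v) x y := fun x y =>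
    ReflTransGen.mono (fun u v huv => tilt_pos huv W) _ _ (hconn x y)
  have hd : IsBalanced (tilt (tilt a W) (V - W)) := by rwa [tilt_tilt, add_sub_cancel]
  obtain ⟨c, hc⟩ := hW.exists_eq_const_of_isBalanced_tilt (tilt_nonneg ha W) hconnW hd
  exact ⟨c, fun x => by linarith [hc x, show (V - W) x = V x - W x from rfl]⟩

theorem isBalanced_tilt_mul_iff (k : K → K → ℝ) (μ V : K → ℝ) :
    IsBalanced (tilt (fun u v => k u v * μ u) V) ↔
      ∀ x, ∑ y, (k x y * exp ((V y - V x) / 2) * μ x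
        - k y x * exp ((V x - V y) / 2) * μ y) = 0 := by
  simp only [IsBalanced, tilt, sum_sub_distrib, sub_eq_zero, mul_right_comm _ (μ _)]

end JumpRates

open JumpRates

theorem exists_potential_making_stationary_general {K : Type*} [Fintype K]
    (k : K → K → ℝ) (hk : ∀ x y, 0 ≤ k x y)
    (hirr : ∀ x y : K, x ≠ y → Relation.TransGen (fun a b => 0 < k a b) x y)
    (μ : K → ℝ) (hμpos : ∀ x, 0 < μ x) :
    ∃ V : K → ℝ,
      (∀ x, ∑ y, (k x y * Real.exp ((V y - V x) / 2) * μ x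
                  - k y x * Real.exp ((V x - V y) / 2) * μ y) = 0) ∧
      ∀ V' : K → ℝ,
        (∀ x, ∑ y, (k x y * Real.exp ((V' y - V' x) / 2) * μ x
                    - k y x * Real.exp ((V' x - V' y) / 2) * μ y) = 0) →
        ∃ c : ℝ, ∀ x, V' x = V x + c := by
  have ha : ∀ u v, 0 ≤ k u v * μ u := fun u v => mul_nonneg (hk u v) (hμpos u).le
  have hconn : ∀ x y, ReflTransGen (fun u v => 0 < k u v * μ u) x y := fun x y =>
    (eq_or_ne x y).elim (fun h => h ▸ .refl) fun h =>
      (TransGen.mono (fun u v huv => mul_pos huv (hμpos u)) _ _ (hirr x y h)).to_reflTransGen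
  simp only [← isBalanced_tilt_mul_iff]
  obtain ⟨V, hV⟩ := exists_isBalanced_tilt ha hconn
  exact ⟨V, hV, fun V' hV' => exists_eq_add_const_of_isBalanced_tilt ha hconn hV hV'⟩

theorem exists_potential_making_stationary {K : Type*} [Fintype K]
    (k : K → K → ℝ) (hk : ∀ x y, 0 ≤ k x y)
    (hirr : ∀ x y : K, x ≠ y → Relation.TransGen (fun a b => 0 < k a b) x y)
    (μ : K → ℝ) (hμpos : ∀ x, 0 < μ x) (hμsum : ∑ x, μ x = 1) :
    ∃ V : K → ℝ,
      (∀ x, ∑ y, (k x y * Real.exp ((V y - V x) / 2) * μ x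
                  - k y x * Real.exp ((V x - V y) / 2) * μ y) = 0) ∧
      ∀ V' : K → ℝ,
        (∀ x, ∑ y, (k x y * Real.exp ((V' y - V' x) / 2) * μ x
                    - k y x * Real.exp ((V' x - V' y) / 2) * μ y) = 0) →
        ∃ c : ℝ, ∀ x, V' x = V x + c :=
  exists_potential_making_stationary_general k hk hirr μ hμpos
end

section
/- Let K be a finite set, k the rates of an irreducible Markov jump process, μ > 0 a probability distribution, and V = V_μ the potential making μ stationary for the rates k_V(x,y) = k(x,y)exp((V(y)-V(x))/2). Then sup over all potentials W of ∑_{x,y} μ(x)[k(x,y) − k_W(x,y)] is attained at W = V, i.e., ∑_{x,y} μ(x)[k(x,y) − k_V(x,y)] = sup_W ∑_{x,y} μ(x)[k(x,y) − k_W(x,y)]. -/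
open Finset

theorem DV_sup_attained_at_stationary_potential {K : Type*} [Fintype K]
    (k : K → K → ℝ) (hk : ∀ x y, 0 ≤ k x y)
    (hirr : ∀ x y : K, x ≠ y → Relation.TransGen (fun a b => 0 < k a b) x y)
    (μ : K → ℝ) (hμpos : ∀ x, 0 < μ x) (hμsum : ∑ x, μ x = 1)
    (V : K → ℝ)
    (hV : ∀ x, ∑ y, (k x y * Real.exp ((V y - V x) / 2) * μ x
                     - k y x * Real.exp ((V x - V y) / 2) * μ y) = 0) :
    IsGreatest
      {r : ℝ | ∃ W : K → ℝ,
        r = ∑ x, ∑ y, μ x * (k x y - k x y * Real.exp ((W y - W x) / 2))}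
      (∑ x, ∑ y, μ x * (k x y - k x y * Real.exp ((V y - V x) / 2))) := by
  classical
  set a : K → K → ℝ := fun x y => μ x * (k x y * Real.exp ((V y - V x) / 2)) with ha
  have hstat : ∀ x, ∑ y, a x y = ∑ y, a y x := by
    intro x
    have h := hV x
    rw [Finset.sum_sub_distrib, sub_eq_zero] at h
    calc ∑ y, a x y = ∑ y, k x y * Real.exp ((V y - V x) / 2) * μ x := by
          apply Finset.sum_congr rfl; intros; simp [ha]; ring
      _ = ∑ y, k y x * Real.exp ((V x - V y) / 2) * μ y := h
      _ = ∑ y, a y x := by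
          apply Finset.sum_congr rfl; intros; simp [ha]; ring
  constructor
  · exact ⟨V, rfl⟩
  · rintro r ⟨W, rfl⟩
    have hswap : ∑ x, ∑ y, a x y * (W y - V y) = ∑ x, ∑ y, a x y * (W x - V x) := by
      rw [Finset.sum_comm]
      apply Finset.sum_congr rfl
      intro b _
      rw [← Finset.sum_mul, ← Finset.sum_mul, ← hstat b]
    have hpt : ∀ x y, a x y * (1 + ((W y - V y) - (W x - V x)) / 2)
        ≤ μ x * (k x y * Real.exp ((W y - W x) / 2)) := by
      intro x y
      have hexp : Real.exp ((W y - W x) / 2)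
          = Real.exp ((V y - V x) / 2) * Real.exp (((W y - V y) - (W x - V x)) / 2) := by
        rw [← Real.exp_add]; ring_nf
      have h1 : (1 : ℝ) + ((W y - V y) - (W x - V x)) / 2
          ≤ Real.exp (((W y - V y) - (W x - V x)) / 2) := by
        have := Real.add_one_le_exp (((W y - V y) - (W x - V x)) / 2); linarith
      have hnn : 0 ≤ a x y :=
        mul_nonneg (hμpos x).le (mul_nonneg (hk x y) (Real.exp_pos _).le)
      calc a x y * (1 + ((W y - V y) - (W x - V x)) / 2)
          ≤ a x y * Real.exp (((W y - V y) - (W x - V x)) / 2) :=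
            mul_le_mul_of_nonneg_left h1 hnn
        _ = μ x * (k x y * Real.exp ((W y - W x) / 2)) := by
            rw [hexp, ha]; ring
    have key : ∑ x, ∑ y, a x y ≤ ∑ x, ∑ y, μ x * (k x y * Real.exp ((W y - W x) / 2)) := by
      have h2 : ∑ x, ∑ y, a x y * (1 + ((W y - V y) - (W x - V x)) / 2)
          ≤ ∑ x, ∑ y, μ x * (k x y * Real.exp ((W y - W x) / 2)) :=
        Finset.sum_le_sum fun x _ => Finset.sum_le_sum fun y _ => hpt x y
      have h3 : ∑ x, ∑ y, a x y * (1 + ((W y - V y) - (W x - V x)) / 2)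
          = (∑ x, ∑ y, a x y)
            + ((∑ x, ∑ y, a x y * (W y - V y)) - ∑ x, ∑ y, a x y * (W x - V x)) / 2 := by
        have e : ∀ x y : K, a x y * (1 + ((W y - V y) - (W x - V x)) / 2)
            = a x y + (a x y * (W y - V y) - a x y * (W x - V x)) / 2 := by
          intros; ring
        simp_rw [e, Finset.sum_add_distrib, ← Finset.sum_div, ← Finset.sum_sub_distrib]
      rw [h3, hswap] at h2
      simpa using h2
    have expand : ∀ (U : K → ℝ), ∑ x, ∑ y, μ x * (k x y - k x y * Real.exp ((U y - U x) / 2))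
        = (∑ x, ∑ y, μ x * k x y) - ∑ x, ∑ y, μ x * (k x y * Real.exp ((U y - U x) / 2)) := by
      intro U
      simp_rw [← Finset.sum_sub_distrib]
      apply Finset.sum_congr rfl; intro x _
      apply Finset.sum_congr rfl; intro y _
      ring
    rw [expand W, expand V]
    have : ∑ x, ∑ y, μ x * (k x y * Real.exp ((V y - V x) / 2)) = ∑ x, ∑ y, a x y := rfl
    rw [this]
    linarith
end

section
/- For the homogeneous totally asymmetric random walk on the ring Z/NZ with rates k(x,x+1) = p > 0, and a strictly positive probability distribution μ on the ring, the potential V solving μ(x) p e^{(V(x+1)-V(x))/2} = μ(x−1) p e^{(V(x)-V(x−1))/2} for all x satisfies (V(x+1)−V(x))/2 = −log μ(x) + (1/N)∑_y log μ(y), and the resulting Donsker-Varadhan functional equals I(μ) = p − pN(∏_{y=1}^N μ(y))^{1/N}. -/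
/-!
Cancelling `p`, the stationarity equations say that the probability flux
`J x = μ x * exp ((V (x + 1) - V x) / 2)` satisfies `J (x + 1) = J x`, so on the ring it is a
constant `c`. The exponents telescope to `0` around the ring, hence `c ^ N = ∏ μ`: the flux is
the geometric mean of `μ`. Taking logarithms gives the potential, and the Donsker–Varadhan sum is
`p ∑ μ - p ∑ J = p - p N c`.
-/

open Finset Real

theorem Function.Periodic.zmod_eq_zero {α : Type*} {N : ℕ} {g : ZMod N → α}
    (hg : Function.Periodic g 1) (x : ZMod N) : g x = g 0 := by
  obtain ⟨n, rfl⟩ := ZMod.intCast_surjective x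
  simpa using hg.int_mul_eq n

theorem Fintype.sum_sub_add_right_eq_zero {G M : Type*} [AddGroup G] [Fintype G]
    [AddCommGroup M] (V : G → M) (a : G) : ∑ x, (V (x + a) - V x) = 0 := by
  rw [sum_sub_distrib, sub_eq_zero]
  exact Equiv.sum_comp (Equiv.addRight a) V

section ConstantFlux

variable {ι : Type*} [Fintype ι] {μ f : ι → ℝ} {c : ℝ}

theorem pow_card_eq_prod_of_mul_exp_eq (hc : ∀ x, μ x * exp (f x) = c)
    (hf : ∑ x, f x = 0) : c ^ Fintype.card ι = ∏ x, μ x :=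
  calc c ^ Fintype.card ι = ∏ x, μ x * exp (f x) := by simp only [hc, prod_const, card_univ]
    _ = ∏ x, μ x := by rw [prod_mul_distrib, ← exp_sum, hf, exp_zero, mul_one]

theorem eq_prod_rpow_inv_card_of_mul_exp_eq [Nonempty ι] (hc₀ : 0 ≤ c)
    (hc : ∀ x, μ x * exp (f x) = c) (hf : ∑ x, f x = 0) :
    c = (∏ x, μ x) ^ ((Fintype.card ι : ℝ)⁻¹) := by
  rw [← pow_card_eq_prod_of_mul_exp_eq hc hf, pow_rpow_inv_natCast hc₀ Fintype.card_ne_zero]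

theorem eq_neg_log_add_mean_log_of_mul_exp_eq [Nonempty ι] (hμ : ∀ x, 0 < μ x)
    (hc : ∀ x, μ x * exp (f x) = c) (hf : ∑ x, f x = 0) (x : ι) :
    f x = -log (μ x) + (1 / (Fintype.card ι : ℝ)) * ∑ y, log (μ y) := by
  have hlog_c : Fintype.card ι * log c = ∑ y, log (μ y) := by
    rw [← log_pow, pow_card_eq_prod_of_mul_exp_eq hc hf, log_prod fun y _ => (hμ y).ne']
  have hf_x : f x = log c - log (μ x) := by
    rw [← hc x, log_mul (hμ x).ne' (exp_pos _).ne', log_exp]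
    ring
  have hcard : (Fintype.card ι : ℝ) ≠ 0 := Nat.cast_ne_zero.mpr Fintype.card_ne_zero
  rw [hf_x, ← hlog_c]
  field_simp
  ring

theorem sum_mul_one_sub_exp_of_mul_exp_eq (p : ℝ) (hc : ∀ x, μ x * exp (f x) = c) :
    ∑ x, p * μ x * (1 - exp (f x)) = p * ∑ x, μ x - p * Fintype.card ι * c := by
  simp only [mul_sub, mul_one, mul_assoc, hc, sum_sub_distrib, ← mul_sum, sum_const, card_univ,
    nsmul_eq_mul]

end ConstantFlux

theorem homogeneous_tasep_potential_and_DV_general (N : ℕ) [NeZero N]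
    (p : ℝ) (hp : 0 < p)
    (μ : ZMod N → ℝ) (hpos : ∀ x, 0 < μ x) (hsum : ∑ x, μ x = 1)
    (V : ZMod N → ℝ)
    (hV : ∀ x : ZMod N,
      μ x * p * Real.exp ((V (x + 1) - V x) / 2)
        = μ (x - 1) * p * Real.exp ((V x - V (x - 1)) / 2)) :
    (∀ x : ZMod N,
      (V (x + 1) - V x) / 2 = -Real.log (μ x) + (1 / (N : ℝ)) * ∑ y, Real.log (μ y)) ∧
    ∑ x : ZMod N, p * μ x * (1 - Real.exp ((V (x + 1) - V x) / 2))
      = p - p * (N : ℝ) * (∏ y, μ y) ^ ((N : ℝ)⁻¹) := by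
  set f : ZMod N → ℝ := fun x => (V (x + 1) - V x) / 2
  have hflux : Function.Periodic (fun x => μ x * exp (f x)) 1 := fun x => by
    have h := hV (x + 1)
    rw [add_sub_cancel_right] at h
    exact mul_left_cancel₀ hp.ne' (by linear_combination h)
  have hc : ∀ x, μ x * exp (f x) = μ 0 * exp (f 0) := hflux.zmod_eq_zero
  have hf : ∑ x, f x = 0 := by
    rw [← sum_div, Fintype.sum_sub_add_right_eq_zero, zero_div]
  have hc₀ : 0 ≤ μ 0 * exp (f 0) := (mul_pos (hpos 0) (exp_pos _)).le
  have hcard := ZMod.card N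
  refine ⟨fun x => ?_, ?_⟩
  · simpa [hcard] using eq_neg_log_add_mean_log_of_mul_exp_eq hpos hc hf x
  · rw [sum_mul_one_sub_exp_of_mul_exp_eq p hc, hsum, eq_prod_rpow_inv_card_of_mul_exp_eq hc₀ hc hf,
      hcard, mul_one]

theorem homogeneous_tasep_potential_and_DV (N : ℕ) [NeZero N] (hN : 2 < N)
    (p : ℝ) (hp : 0 < p)
    (μ : ZMod N → ℝ) (hpos : ∀ x, 0 < μ x) (hsum : ∑ x, μ x = 1)
    (V : ZMod N → ℝ)
    (hV : ∀ x : ZMod N,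
      μ x * p * Real.exp ((V (x + 1) - V x) / 2)
        = μ (x - 1) * p * Real.exp ((V x - V (x - 1)) / 2)) :
    (∀ x : ZMod N,
      (V (x + 1) - V x) / 2 = -Real.log (μ x) + (1 / (N : ℝ)) * ∑ y, Real.log (μ y)) ∧
    ∑ x : ZMod N, p * μ x * (1 - Real.exp ((V (x + 1) - V x) / 2))
      = p - p * (N : ℝ) * (∏ y, μ y) ^ ((N : ℝ)⁻¹) :=
  homogeneous_tasep_potential_and_DV_general N p hp μ hpos hsum V hV
end

section
/- Let L be a self-adjoint Markov generator on a finite state space with stationary ρ_e > 0. For μ = ρ_e(1 + εh)² /normalization, i.e., f = √(μ/ρ_e) = 1 + εh + O(ε²), the time derivative of I_e(μ_t) at μ_t = μ satisfies d/dt I_e(μ_t) = −2ε² ∑_x ρ_e(x) [(L h)(x)]² + o(ε²). In particular, under detailed balance, d/dt I_e(μ_t) < 0 for all μ sufficiently close to ρ_e with Lh ≠ 0. -/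
open Finset Asymptotics

/-- The backward generator `Lf(x) = ∑_y k(x,y)[f(y)-f(x)]`. -/
noncomputable def gen {K : Type*} [Fintype K] (k : K → K → ℝ) (f : K → ℝ) (x : K) : ℝ :=
  ∑ y, k x y * (f y - f x)

theorem DV_derivative_negative_near_equilibrium {K : Type*} [Fintype K]
    (k : K → K → ℝ) (hk : ∀ x y, 0 ≤ k x y)
    (ρ : K → ℝ) (hρpos : ∀ x, 0 < ρ x)
    (hsa : ∀ f g : K → ℝ,
      ∑ x, ρ x * f x * gen k g x = ∑ x, ρ x * gen k f x * g x)
    (h : K → ℝ) :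
    ((fun ε : ℝ =>
        (-∑ x, (ρ x / (1 + ε * h x)) * gen k (fun z => (1 + ε * h z) ^ 2) x *
          gen k (fun z => 1 + ε * h z) x)
        + 2 * ε ^ 2 * ∑ x, ρ x * (gen k h x) ^ 2)
      =o[nhds 0] fun ε => ε ^ 2) ∧
    (gen k h ≠ 0 → ∃ δ > 0, ∀ ε : ℝ, ε ≠ 0 → |ε| < δ →
      -∑ x, (ρ x / (1 + ε * h x)) * gen k (fun z => (1 + ε * h z) ^ 2) x *
        gen k (fun z => 1 + ε * h z) x < 0) := by
  set A := ∑ x, ρ x * (gen k h x) ^ 2 with hA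
  set T : ℝ → ℝ := fun ε => ∑ x, ρ x / (1 + ε * h x) *
      ((2 * gen k h x + ε * gen k (fun z => h z ^ 2) x) * gen k h x) with hT
  have genA : ∀ (ε : ℝ) (x : K), gen k (fun z => 1 + ε * h z) x = ε * gen k h x := by
    intro ε x
    simp only [gen, Finset.mul_sum]
    exact Finset.sum_congr rfl fun y _ => by ring
  have genB : ∀ (ε : ℝ) (x : K), gen k (fun z => (1 + ε * h z) ^ 2) x
      = ε * (2 * gen k h x) + ε ^ 2 * gen k (fun z => h z ^ 2) x := by
    intro ε x
    simp only [gen, Finset.mul_sum, ← Finset.sum_add_distrib]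
    exact Finset.sum_congr rfl fun y _ => by ring
  have key : ∀ ε : ℝ,
      (∑ x, (ρ x / (1 + ε * h x)) * gen k (fun z => (1 + ε * h z) ^ 2) x *
        gen k (fun z => 1 + ε * h z) x) = ε ^ 2 * T ε := by
    intro ε
    rw [hT, Finset.mul_sum]
    refine Finset.sum_congr rfl fun x _ => ?_
    rw [genA, genB]; ring
  have hTcont : ContinuousAt T 0 := by
    rw [hT]
    apply tendsto_finset_sum
    intro x _
    have hden : ContinuousAt (fun ε : ℝ => 1 + ε * h x) 0 := by fun_prop
    have hne : (1 : ℝ) + 0 * h x ≠ 0 := by norm_num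
    exact ((continuousAt_const.div hden hne).mul (by fun_prop))
  have hT0 : T 0 = 2 * A := by
    rw [hT, hA, Finset.mul_sum]
    refine Finset.sum_congr rfl fun x _ => ?_
    simp
    ring
  refine ⟨?_, ?_⟩
  · have heq : (fun ε : ℝ =>
        (-∑ x, (ρ x / (1 + ε * h x)) * gen k (fun z => (1 + ε * h z) ^ 2) x *
          gen k (fun z => 1 + ε * h z) x) + 2 * ε ^ 2 * A)
        = fun ε => ε ^ 2 * (2 * A - T ε) := by
      funext ε
      rw [key ε]; ring
    rw [heq]
    have hto : Filter.Tendsto (fun ε => 2 * A - T ε) (nhds 0) (nhds 0) := by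
      have := (tendsto_const_nhds (x := 2 * A)).sub hTcont.tendsto
      rwa [hT0, sub_self] at this
    have h1 : (fun ε => 2 * A - T ε) =o[nhds 0] (fun _ : ℝ => (1 : ℝ)) :=
      (isLittleO_one_iff ℝ).mpr hto
    have := (isBigO_refl (fun ε : ℝ => ε ^ 2) (nhds 0)).mul_isLittleO h1
    simpa using this
  · intro hLh
    have hApos : 0 < A := by
      obtain ⟨x, hx⟩ := Function.ne_iff.mp hLh
      refine Finset.sum_pos' (fun y _ => ?_) ⟨x, Finset.mem_univ x, ?_⟩
      · exact mul_nonneg (hρpos y).le (sq_nonneg _)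
      · exact mul_pos (hρpos x) (pow_two_pos_of_ne_zero hx)
    have hTpos : ∀ᶠ ε in nhds 0, 0 < T ε := by
      have h0 : (0 : ℝ) < T 0 := by rw [hT0]; positivity
      exact hTcont.tendsto.eventually (eventually_gt_nhds h0)
    obtain ⟨δ, hδ, hball⟩ := Metric.eventually_nhds_iff.mp hTpos
    refine ⟨δ, hδ, fun ε hε hεδ => ?_⟩
    have hTε : 0 < T ε := hball (by rw [Real.dist_eq, sub_zero]; exact hεδ)
    have : (∑ x, (ρ x / (1 + ε * h x)) * gen k (fun z => (1 + ε * h z) ^ 2) x *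
        gen k (fun z => 1 + ε * h z) x) = ε ^ 2 * T ε := key ε
    rw [this]
    exact neg_neg_of_pos (mul_pos (pow_two_pos_of_ne_zero hε) hTε)
end

section
/- Let K be a finite set with irreducible rates k and stationary ρ > 0. Write μ = ρ(1 + εh) with ∑_x ρ(x)h(x) = 0. Then the potential V_μ making μ stationary for the tilted rates k_V(x,y) = k(x,y)e^{(V(y)−V(x))/2} satisfies V_μ = εv + O(ε²) where v solves the linear equation L_s v = L* h, and this equation has a solution unique up to an additive constant. -/
open Finset

/-- The ρ-adjoint generator `L*f(x) = ∑_y (ρ(y)k(y,x)/ρ(x))[f(y)-f(x)]`. -/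
noncomputable def genStar {K : Type*} [Fintype K] (k : K → K → ℝ) (ρ : K → ℝ) (f : K → ℝ)
    (x : K) : ℝ :=
  ∑ y, (ρ y * k y x / ρ x) * (f y - f x)

/-!
Write `G(ε, V)` for the stationarity defect of `ρ (1 + ε h)` under the rates `k_V`. It is smooth,
vanishes at `(0, 0)` because `ρ` is stationary, and its `V`-derivative there is `ρ L_s`, whose
kernel consists of the constants by the maximum principle for the irreducible generator `L + L*`.
Adding `∑ V` to `G` removes this kernel, so the implicit function theorem yields a `C²` branch
`ε ↦ V(ε)` of zeros; as `G` always sums to zero over `K`, these are genuine zeros of the defect.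
The `ε`-derivative of `G` at `(0, 0)` is `-ρ L* h`, so differentiating `G(ε, V(ε)) = 0` shows that
`v = V'(0)` solves `L_s v = L* h`, and Taylor's theorem gives `V(ε) = ε v + O(ε²)`.
-/

open Filter Asymptotics Topology

-- The mean value theorem for `s ↦ f s - (s - a) • f' a`, whose derivative is `O(s - a)`.
lemma isBigO_sub_sub_smul_deriv {E : Type*} [NormedAddCommGroup E] [NormedSpace ℝ E]
    {f : ℝ → E} {a : ℝ} (hf : ContDiffAt ℝ 2 f a) :
    (fun t => f t - f a - (t - a) • deriv f a) =O[𝓝 a] fun t => (t - a) ^ 2 := by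
  have hderiv : ∀ᶠ t in 𝓝 a, HasDerivAt f (deriv f t) t :=
    (hf.eventually (by simp)).mono fun t ht => (ht.differentiableAt two_ne_zero).hasDerivAt
  obtain ⟨c, hc, hlip⟩ := (((hf.derivWithin (m := 1) (by norm_num)).differentiableAt
    one_ne_zero).hasDerivAt.isBigO_sub).exists_pos
  obtain ⟨r, hr, hball⟩ := Metric.eventually_nhds_iff_ball.1 (hderiv.and hlip.bound)
  refine IsBigO.of_bound c (Metric.eventually_nhds_iff_ball.2 ⟨r, hr, fun t ht => ?_⟩)
  have hsub : Metric.closedBall a (dist t a) ⊆ Metric.ball a r :=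
    Metric.closedBall_subset_ball (Metric.mem_ball.1 ht)
  have hmvt := (convex_closedBall a (dist t a)).norm_image_sub_le_of_norm_hasDerivWithin_le
    (f := fun s => f s - (s - a) • deriv f a) (C := c * dist t a)
    (fun s hs => (((hball s (hsub hs)).1.sub
      (((hasDerivAt_id s).sub_const a).smul_const (deriv f a))).hasDerivWithinAt))
    (fun s hs => by
      simpa using (hball s (hsub hs)).2.trans
        (mul_le_mul_of_nonneg_left (Metric.mem_closedBall.1 hs) hc.le))
    (Metric.mem_closedBall_self dist_nonneg) (Metric.mem_closedBall.2 le_rfl)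
  simp only [sub_self, zero_smul, sub_zero, dist_eq_norm, sub_right_comm (f t)] at hmvt
  rwa [norm_pow, sq, ← mul_assoc]

lemma sum_eq_zero_of_forall_add_sum_eq_zero {K : Type*} [Fintype K] {a u : K → ℝ}
    (ha : ∑ x, a x = 0) (h : ∀ x, a x + ∑ y, u y = 0) : ∑ y, u y = 0 := by
  have hsum : ∑ x, (a x + ∑ y, u y) = 0 := sum_eq_zero fun x _ => h x
  rw [sum_add_distrib, ha, zero_add, sum_const, card_univ, nsmul_eq_mul] at hsum
  rcases mul_eq_zero.1 hsum with hK | hu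
  · have : IsEmpty K := Fintype.card_eq_zero_iff.1 (by exact_mod_cast hK)
    simp
  · exact hu

lemma ContinuousLinearMap.isInvertible_of_injective {𝕜 E : Type*} [NontriviallyNormedField 𝕜]
    [CompleteSpace 𝕜] [NormedAddCommGroup E] [NormedSpace 𝕜 E] [FiniteDimensional 𝕜 E]
    {f : E →L[𝕜] E} (hf : Function.Injective f) : f.IsInvertible :=
  ⟨(LinearEquiv.ofInjectiveEndo f.toLinearMap hf).toContinuousLinearEquiv, rfl⟩

section Generators

variable {K : Type*} [Fintype K]

lemma gen_sub (k : K → K → ℝ) (f g : K → ℝ) (x : K) :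
    gen k (f - g) x = gen k f x - gen k g x := by
  simp only [gen, ← sum_sub_distrib, Pi.sub_apply]
  exact sum_congr rfl fun y _ => by ring

lemma genStar_sub (k : K → K → ℝ) (ρ f g : K → ℝ) (x : K) :
    genStar k ρ (f - g) x = genStar k ρ f x - genStar k ρ g x := by
  simp only [genStar, ← sum_sub_distrib, Pi.sub_apply]
  exact sum_congr rfl fun y _ => by ring

lemma gen_add_genStar (k : K → K → ℝ) (ρ f : K → ℝ) (x : K) :
    gen k f x + genStar k ρ f x = gen (fun x y => k x y + ρ y * k y x / ρ x) f x := by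
  simp only [gen, genStar, ← sum_add_distrib]
  exact sum_congr rfl fun y _ => by ring

lemma mul_gen_add_genStar (k : K → K → ℝ) {ρ : K → ℝ} {x : K} (hρ : ρ x ≠ 0) (f : K → ℝ) :
    ρ x * (gen k f x + genStar k ρ f x) = ∑ y, (k x y * ρ x + k y x * ρ y) * (f y - f x) := by
  simp only [gen, genStar, ← sum_add_distrib, mul_sum]
  exact sum_congr rfl fun y _ => by field_simp

lemma sum_mul_gen_add_genStar (k : K → K → ℝ) {ρ : K → ℝ} (hρ : ∀ x, ρ x ≠ 0) (f : K → ℝ) :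
    ∑ x, ρ x * (gen k f x + genStar k ρ f x) = 0 := by
  simp only [mul_gen_add_genStar k (hρ _)]
  have hswap := sum_comm (s := univ) (t := univ)
    (f := fun x y => (k x y * ρ x + k y x * ρ y) * (f y - f x))
  have hanti : ∑ x, ∑ y, (k y x * ρ y + k x y * ρ x) * (f x - f y)
      = -∑ x, ∑ y, (k x y * ρ x + k y x * ρ y) * (f y - f x) := by
    simp only [← sum_neg_distrib]
    exact sum_congr rfl fun x _ => sum_congr rfl fun y _ => by ring
  linarith

lemma eq_of_gen_eq_zero_of_forall_le {k : K → K → ℝ} (hk : ∀ x y, 0 ≤ k x y) {w : K → ℝ} {a b : K}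
    (hmax : ∀ c, w c ≤ w a) (hw : gen k w a = 0) (hab : 0 < k a b) : w b = w a := by
  have hterm : ∀ c ∈ univ, k a c * (w c - w a) ≤ 0 := fun c _ =>
    mul_nonpos_of_nonneg_of_nonpos (hk a c) (sub_nonpos.2 (hmax c))
  have hb := (sum_eq_zero_iff_of_nonpos hterm).1 hw b (mem_univ b)
  linarith [(mul_eq_zero.1 hb).resolve_left hab.ne']

theorem eq_of_forall_gen_eq_zero {k : K → K → ℝ} (hk : ∀ x y, 0 ≤ k x y)
    (hirr : ∀ x y : K, x ≠ y → Relation.TransGen (fun a b => 0 < k a b) x y)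
    {w : K → ℝ} (hw : ∀ x, gen k w x = 0) (x y : K) : w x = w y := by
  have : Nonempty K := ⟨x⟩
  obtain ⟨z, hz⟩ := Finite.exists_max w
  have hreach : ∀ y, Relation.ReflTransGen (fun a b => 0 < k a b) z y → w y = w z := by
    intro y hy
    induction hy with
    | refl => rfl
    | tail _ hbc ih =>
      exact (eq_of_gen_eq_zero_of_forall_le hk (fun c => ih ▸ hz c) (hw _) hbc).trans ih
  have hall : ∀ y, w y = w z := fun y => hreach y <| by
    by_cases hzy : z = y
    · exact hzy ▸ .refl
    · exact (hirr z y hzy).to_reflTransGen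
  rw [hall x, hall y]

theorem eq_of_forall_gen_add_genStar_eq_zero {k : K → K → ℝ} (hk : ∀ x y, 0 ≤ k x y)
    (hirr : ∀ x y : K, x ≠ y → Relation.TransGen (fun a b => 0 < k a b) x y)
    {ρ : K → ℝ} (hρ : ∀ x, 0 < ρ x) {w : K → ℝ}
    (hw : ∀ x, gen k w x + genStar k ρ w x = 0) (x y : K) : w x = w y := by
  have hsym : ∀ x y, k x y ≤ k x y + ρ y * k y x / ρ x := fun x y =>
    le_add_of_nonneg_right (div_nonneg (mul_nonneg (hρ y).le (hk y x)) (hρ x).le)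
  refine eq_of_forall_gen_eq_zero (fun x y => (hk x y).trans (hsym x y)) (fun x y hxy => ?_)
    (fun x => (gen_add_genStar k ρ w x).symm.trans (hw x)) x y
  exact Relation.TransGen.mono (fun a b (hab : 0 < k a b) => hab.trans_le (hsym a b)) _ _
    (hirr x y hxy)

theorem exists_eq_add_const_of_gen_add_genStar_eq {k : K → K → ℝ} (hk : ∀ x y, 0 ≤ k x y)
    (hirr : ∀ x y : K, x ≠ y → Relation.TransGen (fun a b => 0 < k a b) x y)
    {ρ : K → ℝ} (hρ : ∀ x, 0 < ρ x) {v₁ v₂ : K → ℝ}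
    (hv : ∀ x, gen k v₁ x + genStar k ρ v₁ x = gen k v₂ x + genStar k ρ v₂ x) :
    ∃ c : ℝ, ∀ x, v₁ x = v₂ x + c := by
  rcases isEmpty_or_nonempty K with hK | ⟨⟨x₀⟩⟩
  · exact ⟨0, fun x => hK.elim x⟩
  have hconst := eq_of_forall_gen_add_genStar_eq_zero hk hirr hρ (w := v₁ - v₂) fun x => by
    rw [gen_sub, genStar_sub]; linarith [hv x]
  refine ⟨v₁ x₀ - v₂ x₀, fun x => ?_⟩
  have := hconst x x₀
  simp only [Pi.sub_apply] at this
  linarith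

end Generators

section StationarityDefect

variable {K : Type*} [Fintype K]

def stationarityDefect (q : K → K → ℝ) (μ : K → ℝ) (x : K) : ℝ :=
  ∑ y, (q x y * μ x - q y x * μ y)

lemma sum_stationarityDefect (q : K → K → ℝ) (μ : K → ℝ) : ∑ x, stationarityDefect q μ x = 0 := by
  simp only [stationarityDefect, sum_sub_distrib]
  rw [sum_comm (f := fun x y => q y x * μ y), sub_self]

lemma stationarityDefect_add_mul (q : K → K → ℝ) (μ ν : K → ℝ) (t : ℝ) (x : K) :
    stationarityDefect q (fun z => μ z + t * ν z) x
      = stationarityDefect q μ x + t * stationarityDefect q ν x := by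
  simp only [stationarityDefect, mul_sum, ← sum_add_distrib]
  exact sum_congr rfl fun y _ => by ring

lemma stationarityDefect_mul_eq_neg_mul_genStar (k : K → K → ℝ) {ρ : K → ℝ} (hρ : ∀ x, ρ x ≠ 0)
    (hstat : ∀ x, stationarityDefect k ρ x = 0) (f : K → ℝ) (x : K) :
    stationarityDefect k (fun z => ρ z * f z) x = -(ρ x * genStar k ρ f x) := by
  have hx : ∑ y, k x y * ρ x * f x = ∑ y, k y x * ρ y * f x := by
    have hflux := hstat x
    rw [stationarityDefect, sum_sub_distrib, sub_eq_zero] at hflux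
    simp only [← sum_mul, hflux]
  simp only [stationarityDefect, genStar, mul_sum, ← sum_neg_distrib, ← mul_assoc, sum_sub_distrib]
  rw [hx, ← sum_sub_distrib]
  exact sum_congr rfl fun y _ => by field_simp [hρ x]; ring

lemma sum_mul_genStar_eq_zero (k : K → K → ℝ) {ρ : K → ℝ} (hρ : ∀ x, ρ x ≠ 0)
    (hstat : ∀ x, stationarityDefect k ρ x = 0) (f : K → ℝ) :
    ∑ x, ρ x * genStar k ρ f x = 0 := by
  have := sum_stationarityDefect k (fun z => ρ z * f z)
  simp only [stationarityDefect_mul_eq_neg_mul_genStar k hρ hstat, sum_neg_distrib] at this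
  exact neg_eq_zero.1 this

end StationarityDefect

noncomputable def tiltedRates {K : Type*} (k : K → K → ℝ) (V : K → ℝ) (x y : K) : ℝ :=
  k x y * Real.exp ((V y - V x) / 2)

@[simp]
lemma tiltedRates_zero {K : Type*} (k : K → K → ℝ) : tiltedRates k 0 = k := by
  ext x y
  simp [tiltedRates]

section Linearization

variable {K : Type*} [Fintype K]

noncomputable def augmentedDefect (k : K → K → ℝ) (ρ h : K → ℝ) (p : ℝ × (K → ℝ)) (x : K) : ℝ :=
  stationarityDefect (tiltedRates k p.2) (fun z => ρ z * (1 + p.1 * h z)) x + ∑ z, p.2 z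

lemma stationarityDefect_eq_zero_of_augmentedDefect_eq_zero {k : K → K → ℝ} {ρ h : K → ℝ}
    {ε : ℝ} {V : K → ℝ} (hV : augmentedDefect k ρ h (ε, V) = 0) (x : K) :
    stationarityDefect (tiltedRates k V) (fun z => ρ z * (1 + ε * h z)) x = 0 := by
  have hV' : ∀ x, augmentedDefect k ρ h (ε, V) x = 0 := congrFun hV
  have hsum := sum_eq_zero_of_forall_add_sum_eq_zero (sum_stationarityDefect _ _) hV'
  simpa [augmentedDefect, hsum] using hV' x

lemma contDiff_augmentedDefect (k : K → K → ℝ) (ρ h : K → ℝ) {n : WithTop ℕ∞} :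
    ContDiff ℝ n (augmentedDefect k ρ h) := by
  rw [contDiff_pi]
  intro x
  unfold augmentedDefect stationarityDefect tiltedRates
  fun_prop

lemma augmentedDefect_zero {k : K → K → ℝ} {ρ : K → ℝ}
    (hstat : ∀ x, stationarityDefect k ρ x = 0) (h : K → ℝ) :
    augmentedDefect k ρ h ((0 : ℝ), (0 : K → ℝ)) = 0 := by
  ext x
  simpa [augmentedDefect] using hstat x

lemma hasDerivAt_stationarityDefect_tiltedRates_smul (k : K → K → ℝ) (μ u : K → ℝ) (x : K) :
    HasDerivAt (fun t : ℝ => stationarityDefect (tiltedRates k (t • u)) μ x)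
      (∑ y, (k x y * μ x + k y x * μ y) * ((u y - u x) / 2)) 0 := by
  have hexp : ∀ a b, HasDerivAt (fun t : ℝ => Real.exp (((t • u) b - (t • u) a) / 2))
      ((u b - u a) / 2) 0 := fun a b => by
    have hlin : HasDerivAt (fun t : ℝ => ((t • u) b - (t • u) a) / 2) ((u b - u a) / 2) 0 :=
      ((hasDerivAt_mul_const (u b)).sub (hasDerivAt_mul_const (u a))).div_const 2
    simpa using hlin.exp
  unfold stationarityDefect tiltedRates
  refine HasDerivAt.fun_sum fun y _ => ?_
  convert (((hexp x y).const_mul (k x y)).mul_const (μ x)).fun_sub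
    (((hexp y x).const_mul (k y x)).mul_const (μ y)) using 1
  ring

lemma fderiv_augmentedDefect_inr (k : K → K → ℝ) {ρ : K → ℝ} (hρ : ∀ x, ρ x ≠ 0) (h u : K → ℝ) :
    fderiv ℝ (augmentedDefect k ρ h) ((0 : ℝ), (0 : K → ℝ)) (0, u)
      = fun x => ρ x * ((gen k u x + genStar k ρ u x) / 2) + ∑ z, u z := by
  refine (((contDiff_augmentedDefect k ρ h (n := 1)).differentiable one_ne_zero
    _).hasFDerivAt.hasLineDerivAt _).unique ?_
  unfold HasLineDerivAt
  rw [hasDerivAt_pi]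
  intro x
  have hsum : HasDerivAt (fun t : ℝ => ∑ z, (t • u) z) (∑ z, u z) 0 :=
    HasDerivAt.fun_sum fun z _ => hasDerivAt_mul_const (u z)
  convert (hasDerivAt_stationarityDefect_tiltedRates_smul k ρ u x).add hsum using 1
  · ext t
    simp [augmentedDefect]
  · rw [mul_div_assoc', mul_gen_add_genStar k (hρ x), sum_div]
    simp only [mul_div_assoc]

lemma fderiv_augmentedDefect_inl (k : K → K → ℝ) {ρ : K → ℝ} (hρ : ∀ x, ρ x ≠ 0)
    (hstat : ∀ x, stationarityDefect k ρ x = 0) (h : K → ℝ) :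
    fderiv ℝ (augmentedDefect k ρ h) ((0 : ℝ), (0 : K → ℝ)) (1, 0)
      = fun x => -(ρ x * genStar k ρ h x) := by
  refine (((contDiff_augmentedDefect k ρ h (n := 1)).differentiable one_ne_zero
    _).hasFDerivAt.hasLineDerivAt _).unique ?_
  unfold HasLineDerivAt
  rw [hasDerivAt_pi]
  intro x
  have hline : (fun t : ℝ => augmentedDefect k ρ h ((0, 0) + t • (1, 0)) x)
      = fun t => t * stationarityDefect k (fun z => ρ z * h z) x := by
    ext t
    have hμ : (fun z => ρ z * (1 + t * h z)) = fun z => ρ z + t * (ρ z * h z) := by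
      ext z; ring
    simp [augmentedDefect, hμ, stationarityDefect_add_mul, hstat]
  rw [hline, ← stationarityDefect_mul_eq_neg_mul_genStar k hρ hstat]
  simpa using hasDerivAt_mul_const (stationarityDefect k (fun z => ρ z * h z) x)

end Linearization

section ImplicitFunction

variable {K : Type*} [Fintype K] {k : K → K → ℝ} {ρ : K → ℝ}

lemma injective_fderiv_augmentedDefect_comp_inr (hk : ∀ x y, 0 ≤ k x y)
    (hirr : ∀ x y : K, x ≠ y → Relation.TransGen (fun a b => 0 < k a b) x y)
    (hρ : ∀ x, 0 < ρ x) (h : K → ℝ) :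
    Function.Injective
      (fderiv ℝ (augmentedDefect k ρ h) ((0 : ℝ), (0 : K → ℝ)) ∘L .inr ℝ ℝ (K → ℝ)) := by
  have hρ' : ∀ x, ρ x ≠ 0 := fun x => (hρ x).ne'
  rw [injective_iff_map_eq_zero]
  intro u hu
  have hu' : ∀ x, ρ x * ((gen k u x + genStar k ρ u x) / 2) + ∑ z, u z = 0 := fun x => by
    simpa [fderiv_augmentedDefect_inr k hρ'] using congrFun hu x
  have hsum : ∑ z, u z = 0 := sum_eq_zero_of_forall_add_sum_eq_zero
    (by simp only [mul_div_assoc', ← sum_div, sum_mul_gen_add_genStar k hρ', zero_div]) hu'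
  have hconst := eq_of_forall_gen_add_genStar_eq_zero hk hirr hρ (w := u) fun x => by
    have := hu' x
    rw [hsum, add_zero, mul_eq_zero] at this
    linarith [this.resolve_left (hρ' x)]
  ext x
  have : Nonempty K := ⟨x⟩
  have : (Fintype.card K : ℝ) * u x = 0 := by
    rw [← hsum, ← nsmul_eq_mul, ← card_univ, ← sum_const]
    exact sum_congr rfl fun y _ => hconst x y
  exact (mul_eq_zero.1 this).resolve_left (Nat.cast_ne_zero.2 Fintype.card_ne_zero)

lemma gen_add_genStar_deriv_eq_of_augmentedDefect_eq_zero (hρ : ∀ x, ρ x ≠ 0)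
    (hstat : ∀ x, stationarityDefect k ρ x = 0) {h : K → ℝ} {V : ℝ → K → ℝ} (hV₀ : V 0 = 0)
    (hV : DifferentiableAt ℝ V 0) (hVeq : ∀ᶠ ε in 𝓝 0, augmentedDefect k ρ h (ε, V ε) = 0)
    (x : K) :
    (gen k (deriv V 0) x + genStar k ρ (deriv V 0) x) / 2 = genStar k ρ h x := by
  set v := deriv V 0
  have hchain : HasDerivAt (fun ε => augmentedDefect k ρ h (ε, V ε))
      (fderiv ℝ (augmentedDefect k ρ h) ((0 : ℝ), (0 : K → ℝ)) (1, v)) 0 := by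
    refine ((contDiff_augmentedDefect k ρ h (n := 1)).differentiable one_ne_zero
      _).hasFDerivAt.comp_hasDerivAt_of_eq 0 ((hasDerivAt_id 0).prodMk hV.hasDerivAt) ?_
    simp [hV₀]
  have hlin := hchain.unique ((hasDerivAt_const 0 (0 : K → ℝ)).congr_of_eventuallyEq hVeq)
  rw [show ((1 : ℝ), v) = (1, 0) + (0, v) by simp, map_add, fderiv_augmentedDefect_inl k hρ hstat,
    fderiv_augmentedDefect_inr k hρ] at hlin
  have hv : ∀ x, ρ x * ((gen k v x + genStar k ρ v x) / 2 - genStar k ρ h x) + ∑ z, v z = 0 :=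
    fun x => by
      have := congrFun hlin x
      simp only [Pi.add_apply, Pi.zero_apply] at this
      linarith
  have hsum : ∑ z, v z = 0 := sum_eq_zero_of_forall_add_sum_eq_zero (by
    simp only [mul_sub, sum_sub_distrib, mul_div_assoc', ← sum_div,
      sum_mul_gen_add_genStar k hρ, sum_mul_genStar_eq_zero k hρ hstat, zero_div, sub_zero]) hv
  have := hv x
  rw [hsum, add_zero, mul_eq_zero] at this
  linarith [this.resolve_left (hρ x)]

theorem exists_potential_isBigO (hk : ∀ x y, 0 ≤ k x y)
    (hirr : ∀ x y : K, x ≠ y → Relation.TransGen (fun a b => 0 < k a b) x y)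
    (hρ : ∀ x, 0 < ρ x) (hstat : ∀ x, stationarityDefect k ρ x = 0) (h : K → ℝ) :
    ∃ v : K → ℝ, (∀ x, (gen k v x + genStar k ρ v x) / 2 = genStar k ρ h x) ∧
      ∃ V : ℝ → K → ℝ,
        (∀ᶠ ε in 𝓝 0, ∀ x,
          stationarityDefect (tiltedRates k (V ε)) (fun z => ρ z * (1 + ε * h z)) x = 0) ∧
        (fun ε => V ε - ε • v) =O[𝓝 0] fun ε => ε ^ 2 := by
  have hG : ContDiffAt ℝ 2 (augmentedDefect k ρ h) ((0 : ℝ), (0 : K → ℝ)) :=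
    (contDiff_augmentedDefect k ρ h).contDiffAt
  have hinv := ContinuousLinearMap.isInvertible_of_injective
    (injective_fderiv_augmentedDefect_comp_inr hk hirr hρ h)
  set V := hG.implicitFunction two_ne_zero hinv
  have hV₀ : V 0 = 0 := hG.implicitFunction_apply_self two_ne_zero hinv
  have hVsmooth : ContDiffAt ℝ 2 V 0 := hG.contDiffAt_implicitFunction two_ne_zero hinv
  have hVeq : ∀ᶠ ε in 𝓝 0, augmentedDefect k ρ h (ε, V ε) = 0 := by
    simpa [augmentedDefect_zero hstat] using hG.eventually_apply_implicitFunction two_ne_zero hinv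
  refine ⟨deriv V 0, gen_add_genStar_deriv_eq_of_augmentedDefect_eq_zero (fun x => (hρ x).ne')
    hstat hV₀ (hVsmooth.differentiableAt two_ne_zero) hVeq, V,
    hVeq.mono fun ε hε => stationarityDefect_eq_zero_of_augmentedDefect_eq_zero hε, ?_⟩
  simpa [hV₀] using isBigO_sub_sub_smul_deriv hVsmooth

end ImplicitFunction

theorem linearized_potential_equation_general {K : Type*} [Fintype K]
    (k : K → K → ℝ) (hk : ∀ x y, 0 ≤ k x y)
    (hirr : ∀ x y : K, x ≠ y → Relation.TransGen (fun a b => 0 < k a b) x y)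
    (ρ : K → ℝ) (hρpos : ∀ x, 0 < ρ x)
    (hstat : ∀ x, ∑ y, (ρ x * k x y - ρ y * k y x) = 0)
    (h : K → ℝ) :
    ∃ v : K → ℝ,
      (∀ x, (gen k v x + genStar k ρ v x) / 2 = genStar k ρ h x) ∧
      (∀ v₁ v₂ : K → ℝ,
        (∀ x, (gen k v₁ x + genStar k ρ v₁ x) / 2 = genStar k ρ h x) →
        (∀ x, (gen k v₂ x + genStar k ρ v₂ x) / 2 = genStar k ρ h x) →
        ∃ c : ℝ, ∀ x, v₁ x = v₂ x + c) ∧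
      ∃ C : ℝ, ∃ δ > (0 : ℝ), ∀ ε : ℝ, |ε| < δ →
        ∃ V : K → ℝ,
          (∀ x, ∑ y, (k x y * Real.exp ((V y - V x) / 2) * (ρ x * (1 + ε * h x))
              - k y x * Real.exp ((V x - V y) / 2) * (ρ y * (1 + ε * h y))) = 0) ∧
          ∀ x, |V x - ε * v x| ≤ C * ε ^ 2 := by
  have hstat' : ∀ x, stationarityDefect k ρ x = 0 := fun x => by
    simpa only [stationarityDefect, mul_comm] using hstat x
  obtain ⟨v, hv, V, hVstat, hVO⟩ := exists_potential_isBigO hk hirr hρpos hstat' h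
  refine ⟨v, hv, fun v₁ v₂ h₁ h₂ => exists_eq_add_const_of_gen_add_genStar_eq hk hirr hρpos
    fun x => by linarith [h₁ x, h₂ x], ?_⟩
  obtain ⟨C, hC⟩ := hVO.bound
  obtain ⟨δ, hδ, hball⟩ := Metric.eventually_nhds_iff.1 (hVstat.and hC)
  refine ⟨C, δ, hδ, fun ε hε => ?_⟩
  obtain ⟨hstatε, hboundε⟩ := hball (show dist ε 0 < δ by simpa using hε)
  refine ⟨V ε, hstatε, fun x => ?_⟩
  calc |V ε x - ε * v x| ≤ ‖V ε - ε • v‖ := norm_le_pi_norm (V ε - ε • v) x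
    _ ≤ C * ε ^ 2 := by simpa using hboundε

theorem linearized_potential_equation {K : Type*} [Fintype K]
    (k : K → K → ℝ) (hk : ∀ x y, 0 ≤ k x y)
    (hirr : ∀ x y : K, x ≠ y → Relation.TransGen (fun a b => 0 < k a b) x y)
    (ρ : K → ℝ) (hρpos : ∀ x, 0 < ρ x) (hρsum : ∑ x, ρ x = 1)
    (hstat : ∀ x, ∑ y, (ρ x * k x y - ρ y * k y x) = 0)
    (h : K → ℝ) (hmean : ∑ x, ρ x * h x = 0) :
    ∃ v : K → ℝ,
      (∀ x, (gen k v x + genStar k ρ v x) / 2 = genStar k ρ h x) ∧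
      (∀ v₁ v₂ : K → ℝ,
        (∀ x, (gen k v₁ x + genStar k ρ v₁ x) / 2 = genStar k ρ h x) →
        (∀ x, (gen k v₂ x + genStar k ρ v₂ x) / 2 = genStar k ρ h x) →
        ∃ c : ℝ, ∀ x, v₁ x = v₂ x + c) ∧
      ∃ C : ℝ, ∃ δ > (0 : ℝ), ∀ ε : ℝ, |ε| < δ →
        ∃ V : K → ℝ,
          (∀ x, ∑ y, (k x y * Real.exp ((V y - V x) / 2) * (ρ x * (1 + ε * h x))
              - k y x * Real.exp ((V x - V y) / 2) * (ρ y * (1 + ε * h y))) = 0) ∧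
          ∀ x, |V x - ε * v x| ≤ C * ε ^ 2 :=
  linearized_potential_equation_general k hk hirr ρ hρpos hstat h
end
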